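/- Let X be a coupling matrix for (p,q), Y ∈ ℝ^{n×m} arbitrary, P = diag(p), Q = diag(q). Suppose α ∈ ℝ^n satisfies (P − X Q^{-1} Xᵀ) α = Y 1_m − X Q^{-1} Yᵀ 1_n, and set β = Q^{-1}(Yᵀ 1_n − Xᵀ α). Then the matrix Π(Y) = Y − (α 1_mᵀ + 1_n βᵀ) ⊙ X lies in the tangent space, i.e. Π(Y)·1_m = 0_n and Π(Y)ᵀ·1_n = 0_m. -/

import Mathlib

/-!
The row sums of `(α 1ᵀ + 1 βᵀ) ⊙ X` are `P α + X β` and its column sums are `Xᵀ α + Q β`.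
The choice of `β` makes `Q β = Yᵀ 1 - Xᵀ α`, so the column sums of `Π(Y)` vanish; substituting
this `β` into `P α + X β` turns the vanishing of the row sums into the linear system defining `α`.
-/

open Matrix

section
variable {ι κ R : Type*} [CommRing R]

theorem vecMulVec_one_hadamard [Fintype ι] [DecidableEq ι] (a : ι → R) (X : Matrix ι κ R) :
    vecMulVec a 1 ⊙ X = diagonal a * X := by
  ext i j
  simp [hadamard_apply, diagonal_mul]

theorem one_vecMulVec_hadamard [Fintype κ] [DecidableEq κ] (b : κ → R) (X : Matrix ι κ R) :
    vecMulVec 1 b ⊙ X = X * diagonal b := by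
  ext i j
  simp [hadamard_apply, mul_diagonal, mul_comm]

variable [Fintype ι] [Fintype κ] [DecidableEq ι] [DecidableEq κ]

theorem vecMulVec_add_vecMulVec_hadamard_mulVec_one (a : ι → R) (b : κ → R) (X : Matrix ι κ R) :
    ((vecMulVec a 1 + vecMulVec 1 b) ⊙ X) *ᵥ 1 = diagonal (X *ᵥ 1) *ᵥ a + X *ᵥ b := by
  rw [add_hadamard, vecMulVec_one_hadamard, one_vecMulVec_hadamard, add_mulVec,
    ← mulVec_mulVec, ← mulVec_mulVec]
  congr 1
  · ext i
    simp only [mulVec_diagonal, mul_comm]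
  · congr 1
    ext j
    simp only [mulVec_diagonal, Pi.one_apply, mul_one]

theorem vecMulVec_add_vecMulVec_hadamard_transpose_mulVec_one (a : ι → R) (b : κ → R)
    (X : Matrix ι κ R) :
    ((vecMulVec a 1 + vecMulVec 1 b) ⊙ X)ᵀ *ᵥ 1 = Xᵀ *ᵥ a + diagonal (Xᵀ *ᵥ 1) *ᵥ b := by
  rw [transpose_hadamard, transpose_add, transpose_vecMulVec, transpose_vecMulVec, add_comm,
    vecMulVec_add_vecMulVec_hadamard_mulVec_one, add_comm]

end

theorem diagonal_mul_diagonal_inv {ι K : Type*} [Fintype ι] [DecidableEq ι] [Field K] (q : ι → K)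
    (hq : ∀ i, q i ≠ 0) :
    diagonal q * diagonal (fun i => (q i)⁻¹) = 1 := by
  rw [diagonal_mul_diagonal, ← diagonal_one]
  exact congrArg diagonal (funext fun i => mul_inv_cancel₀ (hq i))

theorem projection_lies_in_tangent_general (n m : ℕ)
    (p : Fin n → ℝ) (q : Fin m → ℝ)
    (hq : ∀ j, 0 < q j)
    (X : Matrix (Fin n) (Fin m) ℝ)
    (hrow : X.mulVec (fun _ => 1) = p) (hcol : Xᵀ.mulVec (fun _ => 1) = q)
    (Y : Matrix (Fin n) (Fin m) ℝ)
    (α : Fin n → ℝ)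
    (hα : (Matrix.diagonal p - X * Matrix.diagonal (fun j => (q j)⁻¹) * Xᵀ).mulVec α =
          Y.mulVec (fun _ => 1) -
            (X * Matrix.diagonal (fun j => (q j)⁻¹)).mulVec (Yᵀ.mulVec (fun _ => 1)))
    (β : Fin m → ℝ)
    (hβ : β = (Matrix.diagonal (fun j => (q j)⁻¹)).mulVec
            (Yᵀ.mulVec (fun _ => 1) - Xᵀ.mulVec α))
    (PiY : Matrix (Fin n) (Fin m) ℝ)
    (hPiY : ∀ i j, PiY i j = Y i j - (α i + β j) * X i j) :
    PiY.mulVec (fun _ => 1) = 0 ∧ PiYᵀ.mulVec (fun _ => 1) = 0 := by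
  obtain rfl : PiY = Y - (vecMulVec α 1 + vecMulVec 1 β) ⊙ X := by
    ext i j
    simp [hPiY, hadamard_apply]
  simp only [← Pi.one_def] at hrow hcol hα hβ ⊢
  constructor
  · rw [sub_mulVec, vecMulVec_add_vecMulVec_hadamard_mulVec_one, hrow, hβ]
    rw [sub_mulVec] at hα
    simp only [mulVec_sub, mulVec_mulVec, Matrix.mul_assoc] at hα ⊢
    linear_combination -hα
  · rw [transpose_sub, sub_mulVec, vecMulVec_add_vecMulVec_hadamard_transpose_mulVec_one, hcol,
      hβ, mulVec_mulVec, diagonal_mul_diagonal_inv q fun j => (hq j).ne', one_mulVec]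
    abel

theorem projection_lies_in_tangent (n m : ℕ)
    (p : Fin n → ℝ) (q : Fin m → ℝ)
    (hp : ∀ i, 0 < p i) (hq : ∀ j, 0 < q j)
    (X : Matrix (Fin n) (Fin m) ℝ) (hX : ∀ i j, 0 < X i j)
    (hrow : X.mulVec (fun _ => 1) = p) (hcol : Xᵀ.mulVec (fun _ => 1) = q)
    (Y : Matrix (Fin n) (Fin m) ℝ)
    (α : Fin n → ℝ)
    (hα : (Matrix.diagonal p - X * Matrix.diagonal (fun j => (q j)⁻¹) * Xᵀ).mulVec α =
          Y.mulVec (fun _ => 1) -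
            (X * Matrix.diagonal (fun j => (q j)⁻¹)).mulVec (Yᵀ.mulVec (fun _ => 1)))
    (β : Fin m → ℝ)
    (hβ : β = (Matrix.diagonal (fun j => (q j)⁻¹)).mulVec
            (Yᵀ.mulVec (fun _ => 1) - Xᵀ.mulVec α))
    (PiY : Matrix (Fin n) (Fin m) ℝ)
    (hPiY : ∀ i j, PiY i j = Y i j - (α i + β j) * X i j) :
    PiY.mulVec (fun _ => 1) = 0 ∧ PiYᵀ.mulVec (fun _ => 1) = 0 :=
  projection_lies_in_tangent_general n m p q hq X hrow hcol Y α hα β hβ PiY hPiY
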